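/- arXiv:1203.4056 — 2 statements merged into one kernel-verified Lean document; each statement's English description precedes it below -/
import Mathlib

section
/- Let X be a finite index type, g a Lie algebra, and suppose to every subset P ⊆ X is assigned a Lie subalgebra u(P) of g such that u(P ∪ Q) = Lie(u(P) ∪ u(Q)) for all P, Q, and u is monotone. Let H_δ = Σ_{E ∈ ℰ} H_E with H_E ∈ g 'supported on E'. Assume: (propagating property) for every edge E ∈ ℰ and every nonempty E' ⊆ E, Lie([H_E, u(E')] ∪ u(E')) = u(E); and (infection) C ⊆ X infects (X, ℰ). Assume further that for edges F ⊆ P we have [H_F, u(E')] ⊆ u(P) whenever E' ⊆ P. Then Lie({H_δ} ∪ u(C)) ⊇ u(X); if u(X) is maximal among the relevant subalgebras containing H_δ and u(C), then Lie({H_δ} ∪ u(C)) = u(X). -/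
/-- Infection spread in a hypergraph. -/
def Spreads {α : Type*} (ℰ : Set (Set α)) (A B : Set α) : Prop :=
  B.Nonempty ∧ ∃ E ∈ ℰ, (E ∩ A).Nonempty ∧ E \ A = B ∧
    ∀ F ∈ ℰ, (F ∩ (E ∩ A)).Nonempty → F = E ∨ F ⊆ A

/-- `C` is an infecting set of the hypergraph `(X, ℰ)`. -/
def Infecting {α : Type*} (X : Set α) (ℰ : Set (Set α)) (C : Set α) : Prop :=
  ∃ (m : ℕ) (P : Fin (m + 1) → Set α), P 0 = C ∧ P (Fin.last m) = X ∧
    ∀ i : Fin m, P i.castSucc ⊂ P i.succ ∧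
      Spreads ℰ (P i.castSucc) (P i.succ \ P i.castSucc)

/-!
Induct along the infection chain, maintaining `u Pᵢ ≤ Lie({H_δ} ∪ u(C))`. When `Pᵢ` spreads
through the edge `E`, bracketing `H_δ` with `x ∈ u(E ∩ Pᵢ)` isolates `⁅H_E, x⁆`: every other
edge `F` either misses `E ∩ Pᵢ`, so `⁅H_F, x⁆ = 0`, or lies inside `Pᵢ`, so `⁅H_F, x⁆ ∈ u(Pᵢ)`.
The propagating property then yields `u(E)`, and `u(Pᵢ ∪ E)` is generated by `u(Pᵢ)` and `u(E)`.
-/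

section Infection

open LieSubalgebra

variable {α R L : Type*} [CommRing R] [LieRing L] [LieAlgebra R L]

theorem Infecting.induction {X : Set α} {ℰ : Set (Set α)} {C : Set α} {p : Set α → Prop}
    (hC : Infecting X ℰ C) (hp₀ : p C)
    (hp : ∀ A B, Spreads ℰ A B → p A → p (A ∪ B)) : p X := by
  obtain ⟨m, P, rfl, rfl, hchain⟩ := hC
  suffices ∀ i, p (P i) from this (Fin.last m)
  intro i
  induction i using Fin.induction with
  | zero => exact hp₀
  | succ i ih =>
    obtain ⟨hsub, hspread⟩ := hchain i
    simpa [Set.union_sdiff_cancel hsub.subset] using hp _ _ hspread ih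

theorem LieSubalgebra.lie_mem_of_sum_mem {ι : Type*} {S : LieSubalgebra R L} {s : Finset ι}
    {f : ι → L} {i : ι} (hi : i ∈ s) (hsum : ∑ j ∈ s, f j ∈ S) {x : L} (hx : x ∈ S)
    (hrest : ∀ j ∈ s, j ≠ i → ⁅f j, x⁆ ∈ S) : ⁅f i, x⁆ ∈ S := by
  classical
  have h : ⁅f i, x⁆ = ⁅∑ j ∈ s, f j, x⁆ - ∑ j ∈ s.erase i, ⁅f j, x⁆ := by
    rw [sum_lie, ← Finset.add_sum_erase s _ hi, add_sub_cancel_right]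
  rw [h]
  refine S.sub_mem (S.lie_mem hsum hx) (S.toSubmodule.sum_mem fun j hj => ?_)
  exact hrest j (Finset.mem_of_mem_erase hj) (Finset.ne_of_mem_erase hj)

theorem lie_mem_of_spreads {u : Set α → LieSubalgebra R L} {ℰ : Finset (Set α)}
    {H : Set α → L}
    (hsupp : ∀ F ∈ ℰ, ∀ E' : Set α, F ∩ E' = ∅ → ∀ x ∈ u E', ⁅H F, x⁆ = 0)
    (hloc : ∀ F ∈ ℰ, ∀ P E' : Set α, F ⊆ P → E' ⊆ P → ∀ x ∈ u E', ⁅H F, x⁆ ∈ u P)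
    {S : LieSubalgebra R L} (hδ : ∑ F ∈ ℰ, H F ∈ S) {A E : Set α} (hE : E ∈ ℰ)
    (hA : u A ≤ S) (hEA : ∀ F ∈ ℰ, (F ∩ (E ∩ A)).Nonempty → F = E ∨ F ⊆ A)
    {x : L} (hx : x ∈ u (E ∩ A)) (hxS : x ∈ S) : ⁅H E, x⁆ ∈ S := by
  refine lie_mem_of_sum_mem hE hδ hxS fun F hF hFE => ?_
  by_cases hmeet : (F ∩ (E ∩ A)).Nonempty
  · exact hA (hloc F hF A _ ((hEA F hF hmeet).resolve_left hFE) Set.inter_subset_right x hx)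
  · rw [hsupp F hF _ (Set.not_nonempty_iff_eq_empty.mp hmeet) x hx]
    exact S.zero_mem

theorem le_of_spreads {u : Set α → LieSubalgebra R L} {ℰ : Finset (Set α)} {H : Set α → L}
    (hu_mono : ∀ P Q : Set α, P ⊆ Q → u P ≤ u Q)
    (hu_union : ∀ P Q : Set α,
      u (P ∪ Q) = lieSpan R L ((u P : Set L) ∪ (u Q : Set L)))
    (hsupp : ∀ F ∈ ℰ, ∀ E' : Set α, F ∩ E' = ∅ → ∀ x ∈ u E', ⁅H F, x⁆ = 0)
    (hloc : ∀ F ∈ ℰ, ∀ P E' : Set α, F ⊆ P → E' ⊆ P → ∀ x ∈ u E', ⁅H F, x⁆ ∈ u P)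
    (hprop : ∀ E ∈ ℰ, ∀ E' : Set α, E' ⊆ E → E'.Nonempty →
      lieSpan R L ((fun x => ⁅H E, x⁆) '' (u E' : Set L) ∪ (u E' : Set L)) = u E)
    {S : LieSubalgebra R L} (hδ : ∑ F ∈ ℰ, H F ∈ S) {A B : Set α}
    (hAB : Spreads {E | E ∈ ℰ} A B) (hA : u A ≤ S) : u (A ∪ B) ≤ S := by
  obtain ⟨-, E, hE, hEA, rfl, hF⟩ := hAB
  have huEA : u (E ∩ A) ≤ S := (hu_mono _ _ Set.inter_subset_right).trans hA
  have huE : u E ≤ S := by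
    rw [← hprop E hE _ Set.inter_subset_left hEA, lieSpan_le, Set.union_subset_iff]
    refine ⟨?_, huEA⟩
    rintro _ ⟨x, hx, rfl⟩
    exact lie_mem_of_spreads hsupp hloc hδ hE hA hF hx (huEA hx)
  rw [Set.union_sdiff_self, hu_union, lieSpan_le, Set.union_subset_iff]
  exact ⟨hA, huE⟩

end Infection

theorem stmt9_general {α : Type*} {R L : Type*} [CommRing R] [LieRing L]
    [LieAlgebra R L]
    (u : Set α → LieSubalgebra R L)
    (hu_mono : ∀ P Q : Set α, P ⊆ Q → u P ≤ u Q)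
    (hu_union : ∀ P Q : Set α,
      u (P ∪ Q) = LieSubalgebra.lieSpan R L ((u P : Set L) ∪ (u Q : Set L)))
    (ℰ : Finset (Set α)) (H : Set α → L) (Hδ : L)
    (hHδ : Hδ = ∑ E ∈ ℰ, H E)
    (hsupp : ∀ F ∈ ℰ, ∀ E' : Set α, F ∩ E' = ∅ → ∀ x ∈ u E', ⁅H F, x⁆ = 0)
    (hloc : ∀ F ∈ ℰ, ∀ P E' : Set α, F ⊆ P → E' ⊆ P → ∀ x ∈ u E', ⁅H F, x⁆ ∈ u P)
    (hprop : ∀ E ∈ ℰ, ∀ E' : Set α, E' ⊆ E → E'.Nonempty →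
      LieSubalgebra.lieSpan R L
        ((fun x => ⁅H E, x⁆) '' (u E' : Set L) ∪ (u E' : Set L)) = u E)
    (C : Set α)
    (hC : Infecting Set.univ {E : Set α | E ∈ ℰ} C)
    (hHδmem : Hδ ∈ u Set.univ) :
    LieSubalgebra.lieSpan R L ({Hδ} ∪ (u C : Set L)) = u Set.univ := by
  set S := LieSubalgebra.lieSpan R L ({Hδ} ∪ (u C : Set L))
  have hδ : ∑ E ∈ ℰ, H E ∈ S := hHδ ▸ LieSubalgebra.subset_lieSpan (Or.inl rfl)
  refine le_antisymm ?_ ?_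
  · rw [LieSubalgebra.lieSpan_le, Set.union_subset_iff, Set.singleton_subset_iff]
    exact ⟨hHδmem, hu_mono _ _ (Set.subset_univ C)⟩
  · refine hC.induction (p := fun P => u P ≤ S)
      (fun x hx => LieSubalgebra.subset_lieSpan (Or.inr hx)) ?_
    exact fun A B hAB hA => le_of_spreads hu_mono hu_union hsupp hloc hprop hδ hAB hA

/-- Main theorem (abstract form): if the drift `H_δ = Σ_{E ∈ ℰ} H_E` has the
propagating property and `C` infects the hypergraph `(X, ℰ)`, then the Lie algebra
generated by `H_δ` together with `u(C)` is all of `u(X)`. -/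
theorem stmt9 {α : Type*} [Fintype α] {R L : Type*} [CommRing R] [LieRing L]
    [LieAlgebra R L]
    (u : Set α → LieSubalgebra R L)
    (hu_mono : ∀ P Q : Set α, P ⊆ Q → u P ≤ u Q)
    (hu_union : ∀ P Q : Set α,
      u (P ∪ Q) = LieSubalgebra.lieSpan R L ((u P : Set L) ∪ (u Q : Set L)))
    (ℰ : Finset (Set α)) (H : Set α → L) (Hδ : L)
    (hHδ : Hδ = ∑ E ∈ ℰ, H E)
    (hsupp : ∀ F ∈ ℰ, ∀ E' : Set α, F ∩ E' = ∅ → ∀ x ∈ u E', ⁅H F, x⁆ = 0)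
    (hloc : ∀ F ∈ ℰ, ∀ P E' : Set α, F ⊆ P → E' ⊆ P → ∀ x ∈ u E', ⁅H F, x⁆ ∈ u P)
    (hprop : ∀ E ∈ ℰ, ∀ E' : Set α, E' ⊆ E → E'.Nonempty →
      LieSubalgebra.lieSpan R L
        ((fun x => ⁅H E, x⁆) '' (u E' : Set L) ∪ (u E' : Set L)) = u E)
    (C : Set α)
    (hC : Infecting Set.univ {E : Set α | E ∈ ℰ} C)
    (hHδmem : Hδ ∈ u Set.univ) :
    LieSubalgebra.lieSpan R L ({Hδ} ∪ (u C : Set L)) = u Set.univ :=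
  stmt9_general u hu_mono hu_union ℰ H Hδ hHδ hsupp hloc hprop C hC hHδmem
end

section
/- In the induction of the main theorem: if u(P_j) ⊆ Lie({H_δ} ∪ u(C)) and infection spreads from P_j onto P_{j+1} \ P_j via edge E with E^{(j)} := E ∩ P_j, then [H_E, u(E^{(j)})] = [H_δ, u(E^{(j)})] − Σ_{F ∈ ℰ, F ⊆ P_j} [H_F, u(E^{(j)})], and hence [H_E, u(E^{(j)})] ⊆ Lie({H_δ} ∪ u(C)). -/
open scoped Classical

/-
Expand `⁅H_δ, x⁆ = Σ_{F ∈ ℰ} ⁅H_F, x⁆` and split the edges into those inside `P_j` and the rest.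
Among the rest, an edge missing `E ∩ P_j` commutes with `x`, and by the infection-spread condition
the only edge meeting `E ∩ P_j` without lying in `P_j` is `E` itself (which does not lie in `P_j`,
as it infects a site outside). This gives the identity; every term on its right-hand side lies in
`Lie({H_δ} ∪ u(C))`, since `x` and the `⁅H_F, x⁆` with `F ⊆ P_j` lie in `u(P_j)`.
-/

theorem Finset.eq_sum_sub_sum_filter_of_eq_zero {ι M : Type*} [AddCommGroup M]
    {s : Finset ι} {p : ι → Prop} [DecidablePred p] {g : ι → M} {e : ι}
    (he : e ∈ s) (hpe : ¬ p e) (hg : ∀ i ∈ s, ¬ p i → i ≠ e → g i = 0) :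
    g e = ∑ i ∈ s, g i - ∑ i ∈ s.filter p, g i := by
  have hrest : ∑ i ∈ s.filter (fun i => ¬ p i), g i = g e :=
    Finset.sum_eq_single_of_mem e (Finset.mem_filter.2 ⟨he, hpe⟩) fun i hi hie =>
      hg i (Finset.mem_filter.1 hi).1 (Finset.mem_filter.1 hi).2 hie
  rw [← Finset.sum_filter_add_sum_filter_not s p, hrest]
  abel

theorem stmt10_general {α : Type*} {R L : Type*} [CommRing R] [LieRing L] [LieAlgebra R L]
    (u : Set α → LieSubalgebra R L)
    (ℰ : Finset (Set α)) (H : Set α → L) (Hδ : L)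
    (hHδ : Hδ = ∑ F ∈ ℰ, H F)
    (E Pj Pj1 C : Set α) (hE : E ∈ ℰ)
    (hmono : u (E ∩ Pj) ≤ u Pj)
    (hspread2 : E \ Pj = Pj1 \ Pj)
    (hPne : (Pj1 \ Pj).Nonempty)
    (hside : ∀ F ∈ ℰ, (F ∩ (E ∩ Pj)).Nonempty → F = E ∨ F ⊆ Pj)
    (hcomm : ∀ F ∈ ℰ, F ∩ (E ∩ Pj) = ∅ → ∀ x ∈ u (E ∩ Pj), ⁅H F, x⁆ = 0)
    (hloc : ∀ F ∈ ℰ, F ⊆ Pj → ∀ x ∈ u (E ∩ Pj), ⁅H F, x⁆ ∈ u Pj)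
    (hind : u Pj ≤ LieSubalgebra.lieSpan R L ({Hδ} ∪ (u C : Set L))) :
    (∀ x ∈ u (E ∩ Pj),
      ⁅H E, x⁆ = ⁅Hδ, x⁆ - ∑ F ∈ ℰ.filter (fun F => F ⊆ Pj), ⁅H F, x⁆) ∧
    ∀ x ∈ u (E ∩ Pj),
      ⁅H E, x⁆ ∈ LieSubalgebra.lieSpan R L ({Hδ} ∪ (u C : Set L)) := by
  have hE_not_sub : ¬ E ⊆ Pj := by
    rw [← Set.sdiff_nonempty, hspread2]
    exact hPne
  have hdecomp : ∀ x ∈ u (E ∩ Pj),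
      ⁅H E, x⁆ = ⁅Hδ, x⁆ - ∑ F ∈ ℰ.filter (fun F => F ⊆ Pj), ⁅H F, x⁆ := by
    intro x hx
    rw [hHδ, sum_lie]
    refine Finset.eq_sum_sub_sum_filter_of_eq_zero (g := fun F => ⁅H F, x⁆) (p := (· ⊆ Pj))
      hE hE_not_sub fun F hF hFP hFE => ?_
    by_cases hmeet : (F ∩ (E ∩ Pj)).Nonempty
    · exact ((hside F hF hmeet).resolve_left hFE |> hFP).elim
    · exact hcomm F hF (Set.not_nonempty_iff_eq_empty.1 hmeet) x hx
  refine ⟨hdecomp, fun x hx => ?_⟩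
  set S := LieSubalgebra.lieSpan R L ({Hδ} ∪ (u C : Set L))
  have hHδS : Hδ ∈ S := LieSubalgebra.subset_lieSpan (Set.mem_union_left _ rfl)
  rw [hdecomp x hx]
  refine sub_mem (S.lie_mem hHδS (hind (hmono hx))) (sum_mem fun F hF => ?_)
  obtain ⟨hFℰ, hFP⟩ := Finset.mem_filter.1 hF
  exact hind (hloc F hFℰ hFP x hx)

/-- The induction step of the main theorem: if `u(P_j) ⊆ Lie({H_δ} ∪ u(C))` and the
infection spreads from `P_j` onto `P_{j+1} \ P_j` via the edge `E`, then with
`E^{(j)} = E ∩ P_j` we have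
`[H_E, x] = [H_δ, x] - Σ_{F ∈ ℰ, F ⊆ P_j} [H_F, x]` for `x ∈ u(E^{(j)})`, and hence
`[H_E, u(E^{(j)})] ⊆ Lie({H_δ} ∪ u(C))`. -/
theorem stmt10 {α : Type*} {R L : Type*} [CommRing R] [LieRing L] [LieAlgebra R L]
    (u : Set α → LieSubalgebra R L)
    (ℰ : Finset (Set α)) (H : Set α → L) (Hδ : L)
    (hHδ : Hδ = ∑ F ∈ ℰ, H F)
    (E Pj Pj1 C : Set α) (hE : E ∈ ℰ)
    (hmono : u (E ∩ Pj) ≤ u Pj)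
    (hspread1 : (E ∩ Pj).Nonempty) (hspread2 : E \ Pj = Pj1 \ Pj)
    (hPne : (Pj1 \ Pj).Nonempty)
    (hside : ∀ F ∈ ℰ, (F ∩ (E ∩ Pj)).Nonempty → F = E ∨ F ⊆ Pj)
    (hcomm : ∀ F ∈ ℰ, F ∩ (E ∩ Pj) = ∅ → ∀ x ∈ u (E ∩ Pj), ⁅H F, x⁆ = 0)
    (hloc : ∀ F ∈ ℰ, F ⊆ Pj → ∀ x ∈ u (E ∩ Pj), ⁅H F, x⁆ ∈ u Pj)
    (hind : u Pj ≤ LieSubalgebra.lieSpan R L ({Hδ} ∪ (u C : Set L))) :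
    (∀ x ∈ u (E ∩ Pj),
      ⁅H E, x⁆ = ⁅Hδ, x⁆ - ∑ F ∈ ℰ.filter (fun F => F ⊆ Pj), ⁅H F, x⁆) ∧
    ∀ x ∈ u (E ∩ Pj),
      ⁅H E, x⁆ ∈ LieSubalgebra.lieSpan R L ({Hδ} ∪ (u C : Set L)) :=
  stmt10_general u ℰ H Hδ hHδ E Pj Pj1 C hE hmono hspread2 hPne hside hcomm hloc hind
end
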